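/- arXiv:2601.15970 — 5 statements merged into one kernel-verified Lean document; each statement's English description precedes it below -/
import Mathlib

section
/- Let E be a finite-dimensional real inner product space, let g, h : E → ℝ be differentiable with h convex, and let x₀ ∈ E. If x₁ is a global minimizer over E of the function x ↦ g(x) - ⟪∇h(x₀), x - x₀⟫, then g(x₁) - h(x₁) ≤ g(x₀) - h(x₀); that is, the DCA step does not increase the objective f = g - h. -/
open RealInnerProductSpace

/-!
Convexity of `h` makes its tangent at `x₀` a global minorant, `h x₀ + ⟪∇h x₀, x - x₀⟫ ≤ h x`,
so the DCA surrogate `g x - ⟪∇h x₀, x - x₀⟫ - h x₀` majorizes `f = g - h` and agrees with it at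
`x₀`. Minimizing the surrogate therefore cannot increase `f`.
-/

open Set

section FirstOrderCondition

variable {E : Type*} [NormedAddCommGroup E] [NormedSpace ℝ E] {s : Set E} {f : E → ℝ}
  {f' : E →L[ℝ] ℝ} {x y : E}

theorem ConvexOn.add_le_of_hasFDerivAt (hf : ConvexOn ℝ s f) (hx : x ∈ s) (hy : y ∈ s)
    (hf' : HasFDerivAt f f' x) : f x + f' (y - x) ≤ f y := by
  set ℓ : ℝ →ᵃ[ℝ] E := AffineMap.lineMap x y
  have hconv : ConvexOn ℝ (Icc 0 1) (f ∘ ℓ) :=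
    (hf.comp_affineMap ℓ).subset (hf.1.mapsTo_lineMap hx hy) (convex_Icc 0 1)
  have hderiv : HasDerivAt (f ∘ ℓ) (f' (y - x)) 0 := by
    have hf'0 : HasFDerivAt f f' (ℓ 0) := by simpa [ℓ] using hf'
    simpa using hf'0.comp_hasDerivAt 0 AffineMap.hasDerivAt_lineMap
  have hslope := hconv.le_slope_of_hasDerivAt (left_mem_Icc.2 zero_le_one)
    (right_mem_Icc.2 zero_le_one) one_pos hderiv
  simp only [slope_def_field, Function.comp_apply, ℓ, AffineMap.lineMap_apply_zero,
    AffineMap.lineMap_apply_one, sub_zero, div_one] at hslope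
  linarith

end FirstOrderCondition

theorem ConvexOn.add_inner_le_of_hasGradientAt {E : Type*} [NormedAddCommGroup E]
    [InnerProductSpace ℝ E] [CompleteSpace E] {s : Set E} {f : E → ℝ} {f' x y : E}
    (hf : ConvexOn ℝ s f) (hx : x ∈ s) (hy : y ∈ s) (hf' : HasGradientAt f f' x) :
    f x + ⟪f', y - x⟫ ≤ f y := by
  simpa using hf.add_le_of_hasFDerivAt hx hy (hasGradientAt_iff_hasFDerivAt.mp hf')

theorem dca_step_decreases_general
    {E : Type*} [NormedAddCommGroup E] [InnerProductSpace ℝ E] [FiniteDimensional ℝ E]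
    (g h : E → ℝ) (hh : Differentiable ℝ h)
    (hconv : ConvexOn ℝ Set.univ h) (x₀ x₁ : E)
    (hmin : ∀ x : E,
      g x₁ - ⟪gradient h x₀, x₁ - x₀⟫ ≤ g x - ⟪gradient h x₀, x - x₀⟫) :
    g x₁ - h x₁ ≤ g x₀ - h x₀ := by
  have htangent : h x₀ + ⟪gradient h x₀, x₁ - x₀⟫ ≤ h x₁ :=
    hconv.add_inner_le_of_hasGradientAt (mem_univ x₀) (mem_univ x₁) (hh x₀).hasGradientAt
  have hsurrogate : g x₁ - ⟪gradient h x₀, x₁ - x₀⟫ ≤ g x₀ := by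
    simpa using hmin x₀
  linarith

/-- The DCA step does not increase the objective `f = g - h`. -/
theorem dca_step_decreases
    {E : Type*} [NormedAddCommGroup E] [InnerProductSpace ℝ E] [FiniteDimensional ℝ E]
    (g h : E → ℝ) (hg : Differentiable ℝ g) (hh : Differentiable ℝ h)
    (hconv : ConvexOn ℝ Set.univ h) (x₀ x₁ : E)
    (hmin : ∀ x : E,
      g x₁ - ⟪gradient h x₀, x₁ - x₀⟫ ≤ g x - ⟪gradient h x₀, x - x₀⟫) :
    g x₁ - h x₁ ≤ g x₀ - h x₀ :=
  dca_step_decreases_general g h hh hconv x₀ x₁ hmin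
end

section
/- Let E be a finite-dimensional real inner product space, let g : E → ℝ be differentiable and strongly convex with constant μ > 0 in the sense that g(y) ≥ g(x) + ⟪∇g(x), y - x⟫ + μ‖y - x‖² for all x, y ∈ E, and let h : E → ℝ be convex and differentiable. If x₁ is a global minimizer over E of x ↦ g(x) - ⟪∇h(x₀), x - x₀⟫, then (g(x₀) - h(x₀)) - (g(x₁) - h(x₁)) ≥ μ‖x₁ - x₀‖²; that is, each DCA step decreases f = g - h by at least μ times the squared step length. -/
/-!
At the minimizer `x₁` of the convex surrogate, first-order optimality gives `∇g x₁ = ∇h x₀`.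
Strong convexity of `g` at `x₁` (evaluated at `x₀`) and the gradient inequality of the convex
function `h` at `x₀` (evaluated at `x₁`) then involve the same linear term `⟪∇h x₀, x₁ - x₀⟫`
with opposite signs; adding them gives the decrease.
-/

open RealInnerProductSpace

theorem ConvexOn.add_fderiv_sub_le {E : Type*} [NormedAddCommGroup E] [NormedSpace ℝ E]
    {f : E → ℝ} {f' : E →L[ℝ] ℝ} {x : E} (hf : ConvexOn ℝ Set.univ f)
    (hx : HasFDerivAt f f' x) (y : E) : f x + f' (y - x) ≤ f y := by
  set φ : ℝ → ℝ := f ∘ AffineMap.lineMap x y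
  have hφ : ConvexOn ℝ Set.univ φ := hf.comp_affineMap (AffineMap.lineMap x y)
  have hφ' : HasDerivAt φ (f' (y - x)) 0 := by
    rw [← AffineMap.lineMap_apply_zero (k := ℝ) x y] at hx
    exact hx.comp_hasDerivAt 0 AffineMap.hasDerivAt_lineMap
  have hslope := hφ.le_slope_of_hasDerivAt (Set.mem_univ 0) (Set.mem_univ 1) one_pos hφ'
  simp only [φ, slope_def_field, Function.comp_apply, AffineMap.lineMap_apply_zero,
    AffineMap.lineMap_apply_one, sub_zero, div_one] at hslope
  linarith

theorem ConvexOn.add_inner_gradient_le {E : Type*} [NormedAddCommGroup E] [InnerProductSpace ℝ E]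
    [CompleteSpace E] {f : E → ℝ} {x : E} (hf : ConvexOn ℝ Set.univ f)
    (hx : DifferentiableAt ℝ f x) (y : E) : f x + ⟪gradient f x, y - x⟫ ≤ f y :=
  hf.add_fderiv_sub_le hx.hasGradientAt.hasFDerivAt y

theorem IsLocalMin.gradient_eq_of_sub_inner {E : Type*} [NormedAddCommGroup E]
    [InnerProductSpace ℝ E] [CompleteSpace E] {g : E → ℝ} {a b c : E}
    (hg : DifferentiableAt ℝ g a) (hmin : IsLocalMin (fun x => g x - ⟪c, x - b⟫) a) :
    gradient g a = c := by
  have hlin : HasFDerivAt (fun x => ⟪c, x - b⟫) (innerSL ℝ c) a :=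
    (innerSL ℝ c).hasFDerivAt.comp a (hasFDerivAt_sub_const b)
  have hzero := hmin.hasFDerivAt_eq_zero (hg.hasGradientAt.hasFDerivAt.sub hlin)
  rw [sub_eq_zero] at hzero
  exact (InnerProductSpace.toDual ℝ E).injective hzero

theorem dca_step_sufficient_decrease_general
    {E : Type*} [NormedAddCommGroup E] [InnerProductSpace ℝ E] [FiniteDimensional ℝ E]
    (g h : E → ℝ) (μ : ℝ)
    (hg : Differentiable ℝ g)
    (hsc : ∀ x y : E, g y ≥ g x + ⟪gradient g x, y - x⟫ + μ * ‖y - x‖ ^ 2)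
    (hh : Differentiable ℝ h) (hconv : ConvexOn ℝ Set.univ h)
    (x₀ x₁ : E)
    (hmin : ∀ x : E,
      g x₁ - ⟪gradient h x₀, x₁ - x₀⟫ ≤ g x - ⟪gradient h x₀, x - x₀⟫) :
    (g x₀ - h x₀) - (g x₁ - h x₁) ≥ μ * ‖x₁ - x₀‖ ^ 2 := by
  have hopt : gradient g x₁ = gradient h x₀ :=
    IsLocalMin.gradient_eq_of_sub_inner (hg x₁) (Filter.Eventually.of_forall hmin)
  have hg_step := hsc x₁ x₀
  have hh_step := hconv.add_inner_gradient_le (hh x₀) x₁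
  rw [hopt, ← neg_sub x₁ x₀, inner_neg_right, norm_neg] at hg_step
  linarith

/-- Each DCA step decreases `f = g - h` by at least `μ` times the squared step length. -/
theorem dca_step_sufficient_decrease
    {E : Type*} [NormedAddCommGroup E] [InnerProductSpace ℝ E] [FiniteDimensional ℝ E]
    (g h : E → ℝ) (μ : ℝ) (hμ : 0 < μ)
    (hg : Differentiable ℝ g)
    (hsc : ∀ x y : E, g y ≥ g x + ⟪gradient g x, y - x⟫ + μ * ‖y - x‖ ^ 2)
    (hh : Differentiable ℝ h) (hconv : ConvexOn ℝ Set.univ h)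
    (x₀ x₁ : E)
    (hmin : ∀ x : E,
      g x₁ - ⟪gradient h x₀, x₁ - x₀⟫ ≤ g x - ⟪gradient h x₀, x - x₀⟫) :
    (g x₀ - h x₀) - (g x₁ - h x₁) ≥ μ * ‖x₁ - x₀‖ ^ 2 :=
  dca_step_sufficient_decrease_general g h μ hg hsc hh hconv x₀ x₁ hmin
end

section
/- Let E be a finite-dimensional real inner product space, let g : E → ℝ be differentiable and strongly convex with constant μ > 0 (i.e., g(y) ≥ g(x) + ⟪∇g(x), y - x⟫ + μ‖y - x‖² for all x, y), let h : E → ℝ be convex and differentiable, and set f = g - h. Let (x_k)_{k≥0} be a sequence in E such that for every k, x_{k+1} is a global minimizer of x ↦ g(x) - ⟪∇h(x_k), x - x_k⟫. Then for all natural numbers m ≤ k, f(x_m) - f(x_{k+1}) ≥ μ ∑_{i=m}^{k} ‖x_{i+1} - x_i‖². -/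
/-!
Optimality of the DCA step `x (k + 1)` for the surrogate gives `∇g (x (k + 1)) = ∇h (x k)`.
Strong convexity of `g` between `x (k + 1)` and `x k`, combined with the gradient inequality
of the convex `h` at `x k`, then yields the one-step decrease
`f (x k) - f (x (k + 1)) ≥ μ ‖x (k + 1) - x k‖²`, and these decreases telescope.
-/

open RealInnerProductSpace

section

variable {E : Type*} [NormedAddCommGroup E] [InnerProductSpace ℝ E] [CompleteSpace E]

theorem ConvexOn.inner_gradient_le_sub {s : Set E} {f : E → ℝ} (hf : ConvexOn ℝ s f)
    {a b : E} (ha : a ∈ s) (hb : b ∈ s) (hfa : DifferentiableAt ℝ f a) :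
    ⟪gradient f a, b - a⟫ ≤ f b - f a := by
  set ℓ : ℝ →ᵃ[ℝ] E := AffineMap.lineMap a b
  have hline : ConvexOn ℝ (ℓ ⁻¹' s) (f ∘ ℓ) := hf.comp_affineMap ℓ
  have hderiv : HasDerivAt (f ∘ ℓ) ⟪gradient f a, b - a⟫ 0 := by
    have hfd := hasGradientAt_iff_hasFDerivAt.mp hfa.hasGradientAt
    exact hfd.comp_hasDerivAt_of_eq 0 AffineMap.hasDerivAt_lineMap (by simp [ℓ])
  simpa [slope_def_field, ℓ] using
    hline.le_slope_of_hasDerivAt (x := 0) (y := 1) (by simpa [ℓ]) (by simpa [ℓ]) one_pos hderiv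

def IsDCAStep (g h : E → ℝ) (u v : E) : Prop :=
  IsMinOn (fun y => g y - ⟪gradient h u, y - u⟫) Set.univ v

theorem IsDCAStep.gradient_eq {g h : E → ℝ} {u v : E} (hstep : IsDCAStep g h u v)
    (hg : DifferentiableAt ℝ g v) : gradient g v = gradient h u := by
  have hfd : HasFDerivAt (fun y => g y - ⟪gradient h u, y - u⟫)
      (fderiv ℝ g v - innerSL ℝ (gradient h u)) v :=
    hg.hasFDerivAt.sub
      ((innerSL ℝ (gradient h u)).hasFDerivAt.comp v ((hasFDerivAt_id v).sub_const u))
  have hcrit := (hstep.isLocalMin Filter.univ_mem).hasFDerivAt_eq_zero hfd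
  refine ext_inner_right ℝ fun w => ?_
  have hw := DFunLike.congr_fun hcrit w
  simp only [sub_apply, innerSL_apply_apply, zero_apply, sub_eq_zero] at hw
  rw [inner_gradient_left, hw]

theorem IsDCAStep.sufficient_decrease {g h : E → ℝ} {u v : E} {μ : ℝ}
    (hstep : IsDCAStep g h u v) (hg : DifferentiableAt ℝ g v)
    (hsc : g v + ⟪gradient g v, u - v⟫ + μ * ‖u - v‖ ^ 2 ≤ g u)
    (hh : DifferentiableAt ℝ h u) (hconv : ConvexOn ℝ Set.univ h) :
    μ * ‖v - u‖ ^ 2 ≤ (g u - h u) - (g v - h v) := by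
  have hlin := hconv.inner_gradient_le_sub (Set.mem_univ u) (Set.mem_univ v) hh
  rw [hstep.gradient_eq hg, ← neg_sub v u, inner_neg_right, norm_neg] at hsc
  linarith

end

theorem Finset.sum_Icc_le_sub_of_le_sub {α : Type*} [AddCommGroup α] [PartialOrder α]
    [IsOrderedAddMonoid α] {a u : ℕ → α} (hau : ∀ i, a i ≤ u i - u (i + 1)) {m k : ℕ}
    (hmk : m ≤ k) : ∑ i ∈ Finset.Icc m k, a i ≤ u m - u (k + 1) := by
  calc ∑ i ∈ Finset.Icc m k, a i
      ≤ ∑ i ∈ Finset.Icc m k, (u i - u (i + 1)) := Finset.sum_le_sum fun i _ => hau i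
    _ = u m - u (k + 1) := by
      rw [← neg_sub (u (k + 1)), ← Finset.sum_Icc_sub hmk, ← Finset.sum_neg_distrib]
      simp only [neg_sub]

theorem dca_telescoped_decrease_general
    {E : Type*} [NormedAddCommGroup E] [InnerProductSpace ℝ E] [FiniteDimensional ℝ E]
    (g h : E → ℝ) (μ : ℝ)
    (hg : Differentiable ℝ g)
    (hsc : ∀ x y : E, g y ≥ g x + ⟪gradient g x, y - x⟫ + μ * ‖y - x‖ ^ 2)
    (hh : Differentiable ℝ h) (hconv : ConvexOn ℝ Set.univ h)
    (x : ℕ → E)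
    (hmin : ∀ k : ℕ, ∀ y : E,
      g (x (k + 1)) - ⟪gradient h (x k), x (k + 1) - x k⟫ ≤
        g y - ⟪gradient h (x k), y - x k⟫) :
    ∀ m k : ℕ, m ≤ k →
      (g (x m) - h (x m)) - (g (x (k + 1)) - h (x (k + 1))) ≥
        μ * ∑ i ∈ Finset.Icc m k, ‖x (i + 1) - x i‖ ^ 2 := by
  intro m k hmk
  have hdecrease (i : ℕ) :
      μ * ‖x (i + 1) - x i‖ ^ 2 ≤ (g (x i) - h (x i)) - (g (x (i + 1)) - h (x (i + 1))) :=
    IsDCAStep.sufficient_decrease (fun y _ => hmin i y) (hg _) (hsc _ _) (hh _) hconv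
  rw [ge_iff_le, Finset.mul_sum]
  exact Finset.sum_Icc_le_sub_of_le_sub (u := fun i => g (x i) - h (x i)) hdecrease hmk

/-- Telescoped sufficient decrease of the DCA: for all `m ≤ k`,
`f (x m) - f (x (k+1)) ≥ μ * ∑_{i=m}^{k} ‖x (i+1) - x i‖²` where `f = g - h`. -/
theorem dca_telescoped_decrease
    {E : Type*} [NormedAddCommGroup E] [InnerProductSpace ℝ E] [FiniteDimensional ℝ E]
    (g h : E → ℝ) (μ : ℝ) (hμ : 0 < μ)
    (hg : Differentiable ℝ g)
    (hsc : ∀ x y : E, g y ≥ g x + ⟪gradient g x, y - x⟫ + μ * ‖y - x‖ ^ 2)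
    (hh : Differentiable ℝ h) (hconv : ConvexOn ℝ Set.univ h)
    (x : ℕ → E)
    (hmin : ∀ k : ℕ, ∀ y : E,
      g (x (k + 1)) - ⟪gradient h (x k), x (k + 1) - x k⟫ ≤
        g y - ⟪gradient h (x k), y - x k⟫) :
    ∀ m k : ℕ, m ≤ k →
      (g (x m) - h (x m)) - (g (x (k + 1)) - h (x (k + 1))) ≥
        μ * ∑ i ∈ Finset.Icc m k, ‖x (i + 1) - x i‖ ^ 2 :=
  dca_telescoped_decrease_general g h μ hg hsc hh hconv x hmin
end

section
/- Let g : ℝ → ℝ be given by g(x) = x²/2. For every δ > 0 there exists a convex, continuously differentiable function h : ℝ → ℝ whose derivative is Lipschitz continuous with constant 1, such that, with f = g - h, f is bounded below on ℝ (indeed f(x) ≥ -(∑_{n=0}^{∞} 1/(n+1)^{1+2δ}) - 2 for all x ∈ ℝ), and the DCA iterates defined by x₀ = 0 and x_{k+1} = the global minimizer over ℝ of x ↦ g(x) - h'(x_k)(x - x_k) satisfy |f'(x_k)|² = 1/(k+1)^{1+2δ} for all k ≥ 0. In particular, the gradient decay rate ‖∇f(x_k)‖² of the DCA cannot be improved beyond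 arbitrarily close to O(1/k). -/
open Set Filter intervalIntegral

/-- Lower complexity bound for the DCA: with `g x = x²/2`, for every `δ > 0`
there is a convex, continuously differentiable `h : ℝ → ℝ` with `1`-Lipschitz
derivative such that `f = g - h` is bounded below by `-(∑ 1/(n+1)^(1+2δ)) - 2`,
and the DCA iterates starting from `x₀ = 0` satisfy
`|f' (x k)|² = 1/(k+1)^(1+2δ)` for all `k`. -/
theorem dca_lower_complexity_example :
    ∀ δ : ℝ, 0 < δ → ∃ h : ℝ → ℝ,
      ConvexOn ℝ Set.univ h ∧
      Differentiable ℝ h ∧ Continuous (deriv h) ∧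
      (∀ a b : ℝ, |deriv h a - deriv h b| ≤ |a - b|) ∧
      (∀ t : ℝ,
        t ^ 2 / 2 - h t ≥ -(∑' n : ℕ, 1 / ((n : ℝ) + 1) ^ (1 + 2 * δ)) - 2) ∧
      ∃ x : ℕ → ℝ, x 0 = 0 ∧
        (∀ k : ℕ, ∀ y : ℝ,
          (x (k + 1)) ^ 2 / 2 - deriv h (x k) * (x (k + 1) - x k) ≤
            y ^ 2 / 2 - deriv h (x k) * (y - x k)) ∧
        (∀ k : ℕ,
          |deriv (fun t : ℝ => t ^ 2 / 2 - h t) (x k)| ^ 2 =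
            1 / ((k : ℝ) + 1) ^ (1 + 2 * δ)) := by
  classical
  intro δ hδ
  set s : ℝ := (1 + 2 * δ) / 2 with hs_def
  have hs0 : (0:ℝ) < s := by rw [hs_def]; linarith
  -- the step sizes
  set d : ℕ → ℝ := fun k => ((k : ℝ) + 1) ^ (-s) with hd_def
  have hk1pos : ∀ k : ℕ, (0:ℝ) < (k : ℝ) + 1 := fun k => by positivity
  have hdpos : ∀ k, 0 < d k := fun k => Real.rpow_pos_of_pos (hk1pos k) _
  have hdle1 : ∀ k, d k ≤ 1 := fun k =>
    Real.rpow_le_one_of_one_le_of_nonpos (by norm_num) (by linarith)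
  have hdanti : Antitone d := by
    intro a b hab
    simp only [hd_def]
    rw [Real.rpow_neg (hk1pos a).le, Real.rpow_neg (hk1pos b).le]
    have h1 : ((a:ℝ)+1) ^ s ≤ ((b:ℝ)+1) ^ s := by
      apply Real.rpow_le_rpow (hk1pos a).le _ hs0.le
      have : (a:ℝ) ≤ (b:ℝ) := Nat.cast_le.2 hab
      linarith
    exact inv_anti₀ (Real.rpow_pos_of_pos (hk1pos a) _) h1
  have hd_sq : ∀ k, d k ^ 2 = 1 / ((k : ℝ) + 1) ^ (1 + 2 * δ) := by
    intro k
    have hexp : -s * ((2:ℕ):ℝ) = -(1 + 2 * δ) := by push_cast; rw [hs_def]; ring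
    simp only [hd_def]
    rw [← Real.rpow_natCast (((k:ℝ)+1) ^ (-s)) 2, ← Real.rpow_mul (hk1pos k).le, hexp,
      Real.rpow_neg (hk1pos k).le, one_div]
  -- the iterates
  set X : ℕ → ℝ := fun k => ∑ j ∈ Finset.range k, d j with hX_def
  have hX0 : X 0 = 0 := by simp [hX_def]
  have hXsucc : ∀ k, X (k + 1) = X k + d k := fun k => Finset.sum_range_succ d k
  have hXmono : Monotone X := by
    apply monotone_nat_of_le_succ
    intro k; rw [hXsucc]; linarith [hdpos k]
  -- the interpolating function ψ
  set G : ℕ → ℝ → ℝ := fun k t => max (d (k + 1)) (d k + X k - t) with hG_def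
  have hGnonneg : ∀ k t, 0 ≤ G k t := fun k t => le_trans (hdpos _).le (le_max_left _ _)
  have hbdd : ∀ t : ℝ, BddBelow (Set.range fun k => G k t) := fun t =>
    ⟨0, by rintro y ⟨k, rfl⟩; exact hGnonneg k t⟩
  set ψ : ℝ → ℝ := fun t => ⨅ k, G k t with hψ_def
  have hψ_le : ∀ k t, ψ t ≤ G k t := fun k t => ciInf_le (hbdd t) k
  have hψ_nonneg : ∀ t, 0 ≤ ψ t := fun t => le_ciInf fun k => hGnonneg k t
  have hGanti : ∀ k, Antitone (G k) := by
    intro k a b hab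
    exact max_le_max le_rfl (by linarith)
  have hψ_anti : Antitone ψ := by
    intro a b hab
    exact le_ciInf fun k => (hψ_le k b).trans (hGanti k hab)
  have hψ_key : ∀ a b : ℝ, ψ a ≤ ψ b + |a - b| := by
    intro a b
    have h2 : ∀ k, ψ a - |a - b| ≤ G k b := by
      intro k
      have hG : G k a ≤ G k b + |a - b| := by
        have hba : b - a ≤ |a - b| := by
          rw [abs_sub_comm]; exact le_abs_self _
        have h1 : d k + X k - a ≤ (d k + X k - b) + |a - b| := by linarith
        calc G k a ≤ max (d (k + 1) + |a - b|) (d k + X k - b + |a - b|) :=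
              max_le_max (le_add_of_nonneg_right (abs_nonneg _)) h1
          _ = G k b + |a - b| := (max_add_add_right _ _ _)
      linarith [hψ_le k a]
    linarith [le_ciInf h2]
  have hψ_lip : ∀ a b : ℝ, |ψ a - ψ b| ≤ |a - b| := by
    intro a b
    rw [abs_sub_le_iff]
    refine ⟨by linarith [hψ_key a b], ?_⟩
    have := hψ_key b a
    rw [abs_sub_comm] at this
    linarith
  have hψ_cont : Continuous ψ := by
    refine (LipschitzWith.of_dist_le_mul (K := 1) fun a b => ?_).continuous
    rw [Real.dist_eq, Real.dist_eq, NNReal.coe_one, one_mul]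
    exact hψ_lip a b
  have hψX : ∀ k, ψ (X k) = d k := by
    intro k
    apply le_antisymm
    · refine (hψ_le k (X k)).trans ?_
      have : d k + X k - X k = d k := by ring
      rw [hG_def]; simp only [this]
      exact max_le (hdanti k.le_succ) le_rfl
    · refine le_ciInf fun j => ?_
      rcases lt_or_ge j k with hj | hj
      · exact le_trans (hdanti (Nat.succ_le_of_lt hj)) (le_max_left _ _)
      · have hXX : X k + d k ≤ X j + d j := by
          rcases eq_or_lt_of_le hj with rfl | hj'
          · exact le_rfl
          · have h1 : X (k + 1) ≤ X j := hXmono hj'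
            rw [hXsucc] at h1
            linarith [hdpos j]
        exact le_trans (by linarith) (le_max_right _ _)
  -- the derivative φ of h
  set φ : ℝ → ℝ := fun t => t + ψ t with hφ_def
  have hφ_cont : Continuous φ := continuous_id.add hψ_cont
  have hφ_mono : Monotone φ := by
    intro a b hab
    have h1 : ψ a - ψ b ≤ |a - b| := (le_abs_self _).trans (hψ_lip a b)
    have h2 : |a - b| = b - a := by rw [abs_sub_comm]; exact abs_of_nonneg (by linarith)
    simp only [hφ_def]
    rw [h2] at h1
    linarith
  have hφ_lip : ∀ a b : ℝ, |φ a - φ b| ≤ |a - b| := by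
    intro a b
    rcases le_total a b with hab | hab
    · have h1 : φ a ≤ φ b := hφ_mono hab
      have h2 : ψ b ≤ ψ a := hψ_anti hab
      rw [abs_of_nonpos (by linarith), abs_of_nonpos (by linarith)]
      simp only [hφ_def] at *
      linarith
    · have h1 : φ b ≤ φ a := hφ_mono hab
      have h2 : ψ a ≤ ψ b := hψ_anti hab
      rw [abs_of_nonneg (by linarith), abs_of_nonneg (by linarith)]
      simp only [hφ_def] at *
      linarith
  -- the function h (named F here)
  set F : ℝ → ℝ := fun u => ∫ t in (0:ℝ)..u, φ t with hF_def
  have hφInt : ∀ a b : ℝ, IntervalIntegrable φ MeasureTheory.volume a b := fun a b =>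
    hφ_cont.intervalIntegrable a b
  have hψInt : ∀ a b : ℝ, IntervalIntegrable ψ MeasureTheory.volume a b := fun a b =>
    hψ_cont.intervalIntegrable a b
  have hFderiv : ∀ u, HasDerivAt F (φ u) u := fun u =>
    intervalIntegral.integral_hasDerivAt_right (hφInt 0 u)
      (hφ_cont.stronglyMeasurableAtFilter _ _) hφ_cont.continuousAt
  have hderiv_F : deriv F = φ := funext fun u => (hFderiv u).deriv
  have hFdiff : Differentiable ℝ F := fun u => (hFderiv u).differentiableAt
  -- F t = t^2/2 + ∫ ψ
  have hFval : ∀ t : ℝ, F t = t ^ 2 / 2 + ∫ u in (0:ℝ)..t, ψ u := by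
    intro t
    rw [hF_def]
    simp only [hφ_def]
    rw [intervalIntegral.integral_add (continuous_id'.intervalIntegrable _ _) (hψInt _ _),
      integral_id]
    ring_nf
  -- summability
  set S : ℝ := ∑' n : ℕ, 1 / ((n : ℝ) + 1) ^ (1 + 2 * δ) with hS_def
  have hS_sum : Summable (fun n : ℕ => 1 / ((n : ℝ) + 1) ^ (1 + 2 * δ)) := by
    have h1 : Summable (fun n : ℕ => 1 / (n : ℝ) ^ (1 + 2 * δ)) :=
      Real.summable_one_div_nat_rpow.2 (by linarith)
    have h2 := (summable_nat_add_iff 1).2 h1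
    simpa using h2
  have hS_nonneg : 0 ≤ S := tsum_nonneg fun n => by positivity
  have hsum_le : ∀ K : ℕ, ∑ k ∈ Finset.range K, d k ^ 2 ≤ S := by
    intro K
    rw [Finset.sum_congr rfl fun k _ => hd_sq k]
    exact Summable.sum_le_tsum (Finset.range K) (fun k _ => by positivity) hS_sum
  -- integral bounds
  have hpiece : ∀ (K : ℕ) (t : ℝ), X K ≤ t → (∫ u in X K..t, ψ u) ≤ d K * (t - X K) := by
    intro K t ht
    have h1 : (∫ u in X K..t, ψ u) ≤ ∫ _ in X K..t, d K := by
      apply intervalIntegral.integral_mono_on ht (hψInt _ _) (intervalIntegrable_const)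
      intro u hu
      rw [← hψX K]
      exact hψ_anti hu.1
    rw [intervalIntegral.integral_const, smul_eq_mul] at h1
    linarith
  have hIK : ∀ K : ℕ, (∫ u in (0:ℝ)..X K, ψ u) ≤ ∑ k ∈ Finset.range K, d k ^ 2 := by
    intro K
    induction K with
    | zero => simp [hX0]
    | succ K ih =>
      have hsplit : (∫ u in (0:ℝ)..X K, ψ u) + ∫ u in X K..X (K+1), ψ u
          = ∫ u in (0:ℝ)..X (K+1), ψ u :=
        intervalIntegral.integral_add_adjacent_intervals (hψInt _ _) (hψInt _ _)
      have h2 : (∫ u in X K..X (K+1), ψ u) ≤ d K * (X (K+1) - X K) :=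
        hpiece K _ (by rw [hXsucc]; linarith [hdpos K])
      have h3 : d K * (X (K+1) - X K) = d K ^ 2 := by rw [hXsucc]; ring
      rw [← hsplit, Finset.sum_range_succ]
      linarith
  have hmain : ∀ t : ℝ, (∫ u in (0:ℝ)..t, ψ u) ≤ S + 2 := by
    intro t
    rcases le_or_gt t 0 with ht | ht
    · have h1 : 0 ≤ ∫ u in t..(0:ℝ), ψ u :=
        intervalIntegral.integral_nonneg ht fun u _ => hψ_nonneg u
      rw [intervalIntegral.integral_symm]
      linarith
    · by_cases hcase : ∃ k, t < X k
      · set k := Nat.find hcase with hk_def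
        have hk : t < X k := Nat.find_spec hcase
        have hk0 : k ≠ 0 := by
          intro h0
          rw [h0, hX0] at hk; linarith
        obtain ⟨K, hK⟩ := Nat.exists_eq_succ_of_ne_zero hk0
        have hKt : X K ≤ t := by
          by_contra hcon
          push_neg at hcon
          exact absurd hcon (by simpa using Nat.find_min hcase (by omega : K < k))
        have hsplit : (∫ u in (0:ℝ)..X K, ψ u) + ∫ u in X K..t, ψ u
            = ∫ u in (0:ℝ)..t, ψ u :=
          intervalIntegral.integral_add_adjacent_intervals (hψInt _ _) (hψInt _ _)
        have h1 := hIK K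
        have h2 := hpiece K t hKt
        have h3 : t - X K ≤ d K := by
          have := hXsucc K
          rw [hK, hXsucc] at hk
          linarith
        have h4 : d K * (t - X K) ≤ d K ^ 2 := by nlinarith [hdpos K]
        have h5 := hsum_le (K + 1)
        rw [Finset.sum_range_succ] at h5
        linarith
      · push_neg at hcase
        have hbddX : BddAbove (Set.range X) := ⟨t, by rintro y ⟨k, rfl⟩; exact hcase k⟩
        set L : ℝ := ⨆ k, X k with hL_def
        have hLt : L ≤ t := ciSup_le hcase
        have hXL : ∀ k, X k ≤ L := fun k => le_ciSup hbddX k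
        have htend : Tendsto X atTop (nhds L) := tendsto_atTop_ciSup hXmono hbddX
        have hd0 : Tendsto d atTop (nhds 0) := by
          have h1 : Tendsto (fun x : ℝ => x ^ (-s)) atTop (nhds 0) := tendsto_rpow_neg_atTop hs0
          have h2 : Tendsto (fun k : ℕ => (k : ℝ) + 1) atTop atTop :=
            tendsto_atTop_add_const_right _ 1 tendsto_natCast_atTop_atTop
          exact h1.comp h2
        have hψ0 : ∀ u : ℝ, L ≤ u → ψ u = 0 := by
          intro u hu
          refine le_antisymm ?_ (hψ_nonneg u)
          have hub : ∀ k, ψ u ≤ d k := by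
            intro k
            refine (hψ_le k u).trans (max_le (hdanti k.le_succ) ?_)
            linarith [hXL k]
          exact ge_of_tendsto hd0 (Filter.Eventually.of_forall hub)
        have hP_cont : Continuous fun u => ∫ v in (0:ℝ)..u, ψ v := by
          have hder : ∀ u : ℝ, HasDerivAt (fun u => ∫ v in (0:ℝ)..u, ψ v) (ψ u) u := fun u =>
            intervalIntegral.integral_hasDerivAt_right (hψInt 0 u)
              (hψ_cont.stronglyMeasurableAtFilter _ _) hψ_cont.continuousAt
          have hdiffP : Differentiable ℝ fun u => ∫ v in (0:ℝ)..u, ψ v :=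
            fun u => (hder u).differentiableAt
          exact hdiffP.continuous
        have hPL : (∫ v in (0:ℝ)..L, ψ v) ≤ S := by
          have h1 : Tendsto (fun K => ∫ v in (0:ℝ)..X K, ψ v) atTop
              (nhds (∫ v in (0:ℝ)..L, ψ v)) := (hP_cont.continuousAt.tendsto).comp htend
          exact le_of_tendsto h1
            (Filter.Eventually.of_forall fun K => (hIK K).trans (hsum_le K))
        have hzero : (∫ v in L..t, ψ v) = 0 := by
          have hcg : EqOn ψ (fun _ => (0:ℝ)) (uIcc L t) := by
            intro u hu
            rw [uIcc_of_le hLt] at hu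
            exact hψ0 u hu.1
          rw [intervalIntegral.integral_congr hcg]
          simp
        have hsplit : (∫ u in (0:ℝ)..L, ψ u) + ∫ u in L..t, ψ u
            = ∫ u in (0:ℝ)..t, ψ u :=
          intervalIntegral.integral_add_adjacent_intervals (hψInt _ _) (hψInt _ _)
        linarith
  -- assemble everything
  refine ⟨F, ?_, hFdiff, ?_, ?_, ?_, X, hX0, ?_, ?_⟩
  · exact Monotone.convexOn_univ_of_deriv hFdiff (hderiv_F ▸ hφ_mono)
  · rw [hderiv_F]; exact hφ_cont
  · intro a b; rw [hderiv_F]; exact hφ_lip a b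
  · intro t
    rw [hFval t]
    have := hmain t
    linarith
  · intro k y
    rw [hderiv_F]
    have himg : φ (X k) = X (k + 1) := by
      simp only [hφ_def]
      rw [hψX, hXsucc]
    rw [himg]
    nlinarith [sq_nonneg (y - X (k + 1))]
  · intro k
    have h1 : HasDerivAt (fun t : ℝ => t ^ 2 / 2) (X k) (X k) := by
      have := (hasDerivAt_pow 2 (X k)).div_const 2
      norm_num at this
      exact this
    have hfd : HasDerivAt (fun t : ℝ => t ^ 2 / 2 - F t) (X k - φ (X k)) (X k) :=
      h1.sub (hFderiv (X k))
    rw [hfd.deriv]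
    have h2 : X k - φ (X k) = -d k := by
      simp only [hφ_def]
      rw [hψX]; ring
    rw [h2, abs_neg, abs_of_nonneg (hdpos k).le, hd_sq]
end

section
/- Let g : ℝ → ℝ be given by g(x) = x²/2. For every δ > 0 there exists a convex, continuously differentiable function h : ℝ → ℝ whose derivative is Lipschitz continuous with constant 1, such that f = g - h is itself convex on ℝ and bounded below, while the DCA iterates defined by x₀ = 0 and x_{k+1} = the global minimizer over ℝ of x ↦ g(x) - h'(x_k)(x - x_k) satisfy |f'(x_k)|² = 1/(k+1)^{1+2δ} for all k ≥ 0. Hence even for convex objectives the DCA can converge this slowly. -/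
/-!
For `g = x²/2` the DCA step is `x_{k+1} = h'(x_k)`, so if `h' = id + φ` then
`x_{k+1} = x_k + φ(x_k)` and `f' = -φ`. Take step lengths `c_k = (k+1)^(-(1+2δ)/2)`, knots
`X_k = c_0 + ⋯ + c_{k-1}`, and let `φ` interpolate the points `(X_k, c_k)` linearly. The secant
slopes `c_{k+1}/c_k - 1` increase (`c` is log-convex) and lie in `[-1, 0]` (`c` is positive and
decreasing), so `φ`, realised as the supremum of the secant lines, is antitone (`f` is convex) while
`id + φ` is monotone and `1`-Lipschitz (`h` is convex with `1`-Lipschitz derivative). From `X_0 = 0`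
the iterates are the knots, `|f'(X_k)|² = c_k²`, and `∫ φ ≤ ∑ c_k² < ∞` bounds `f = -∫₀ φ` below.
-/

open Filter Topology

namespace DCASlow

theorem lipschitzWith_one_of_antitone {φ : ℝ → ℝ} (hφ : Antitone φ)
    (hadd : Monotone fun x => x + φ x) : LipschitzWith 1 φ :=
  LipschitzWith.of_le_add fun x y => by
    rcases le_total x y with h | h
    · have := hadd h
      rw [Real.dist_eq, abs_of_nonpos (by linarith)]
      linarith
    · linarith [hφ h, dist_nonneg (x := x) (y := y)]

theorem lipschitzWith_one_add_of_antitone {φ : ℝ → ℝ} (hφ : Antitone φ)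
    (hadd : Monotone fun x => x + φ x) : LipschitzWith 1 fun x => x + φ x :=
  LipschitzWith.of_le_add fun x y => by
    rcases le_total x y with h | h
    · linarith [hadd h, dist_nonneg (x := x) (y := y)]
    · have := hφ h
      rw [Real.dist_eq, abs_of_nonneg (by linarith)]
      linarith

structure DecreasingLogConvex (c : ℕ → ℝ) : Prop where
  pos : ∀ k, 0 < c k
  antitone : Antitone c
  ratio_mono : Monotone fun k => c (k + 1) / c k

def knot (c : ℕ → ℝ) (k : ℕ) : ℝ := ∑ j ∈ Finset.range k, c j

noncomputable def secantSlope (c : ℕ → ℝ) (k : ℕ) : ℝ := c (k + 1) / c k - 1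

noncomputable def secant (c : ℕ → ℝ) (k : ℕ) (x : ℝ) : ℝ :=
  c k + secantSlope c k * (x - knot c k)

/-- The cap `c 0` only matters to the left of `0`; it makes the family bounded above for free. -/
noncomputable def interp (c : ℕ → ℝ) (x : ℝ) : ℝ := max 0 (⨆ k, min (c 0) (secant c k x))

noncomputable def dcaH (c : ℕ → ℝ) (x : ℝ) : ℝ := x ^ 2 / 2 + ∫ s in (0 : ℝ)..x, interp c s

variable {c : ℕ → ℝ}

@[simp] theorem knot_zero : knot c 0 = 0 := by simp [knot]

theorem knot_succ (k : ℕ) : knot c (k + 1) = knot c k + c k := Finset.sum_range_succ _ _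

theorem secant_knot_self (k : ℕ) : secant c k (knot c k) = c k := by simp [secant]

theorem secant_knot_succ (k j : ℕ) :
    secant c k (knot c (j + 1)) = secant c k (knot c j) + secantSlope c k * c j := by
  simp only [secant, knot_succ]
  ring

theorem bddAbove_range_min_secant (x : ℝ) :
    BddAbove (Set.range fun k => min (c 0) (secant c k x)) :=
  ⟨c 0, by rintro _ ⟨k, rfl⟩; exact min_le_left _ _⟩

theorem interp_nonneg (x : ℝ) : 0 ≤ interp c x := le_max_left _ _

theorem sq_half_sub_dcaH (t : ℝ) : t ^ 2 / 2 - dcaH c t = -∫ s in (0 : ℝ)..t, interp c s := by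
  simp [dcaH]

namespace DecreasingLogConvex

theorem knot_mono (hc : DecreasingLogConvex c) : Monotone (knot c) :=
  monotone_nat_of_le_succ fun k => by rw [knot_succ]; linarith [hc.pos k]

theorem knot_nonneg (hc : DecreasingLogConvex c) (k : ℕ) : 0 ≤ knot c k := by
  simpa using hc.knot_mono (Nat.zero_le k)

theorem secantSlope_mono (hc : DecreasingLogConvex c) : Monotone (secantSlope c) :=
  fun _ _ h => sub_le_sub_right (hc.ratio_mono h) 1

theorem secantSlope_nonpos (hc : DecreasingLogConvex c) (k : ℕ) : secantSlope c k ≤ 0 :=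
  sub_nonpos.2 <| (div_le_one (hc.pos k)).2 (hc.antitone k.le_succ)

theorem neg_one_le_secantSlope (hc : DecreasingLogConvex c) (k : ℕ) : -1 ≤ secantSlope c k :=
  neg_le_sub_iff_le_add.2 <| by linarith [div_nonneg (hc.pos (k + 1)).le (hc.pos k).le]

theorem succ_eq_add_secantSlope_mul (hc : DecreasingLogConvex c) (k : ℕ) :
    c (k + 1) = c k + secantSlope c k * c k := by
  rw [secantSlope, sub_mul, div_mul_cancel₀ _ (hc.pos k).ne']
  ring

theorem secant_knot_le (hc : DecreasingLogConvex c) (k j : ℕ) : secant c k (knot c j) ≤ c j := by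
  rcases le_total k j with hkj | hjk
  · induction j, hkj using Nat.le_induction with
    | base => rw [secant_knot_self]
    | succ j hkj ih =>
      have := mul_le_mul_of_nonneg_right (hc.secantSlope_mono hkj) (hc.pos j).le
      rw [secant_knot_succ, hc.succ_eq_add_secantSlope_mul j]
      linarith
  · induction hjk using Nat.decreasingInduction with
    | self => rw [secant_knot_self]
    | of_succ j hj ih =>
      have := mul_le_mul_of_nonneg_right (hc.secantSlope_mono hj.le) (hc.pos j).le
      rw [secant_knot_succ, hc.succ_eq_add_secantSlope_mul j] at ih
      linarith

theorem interp_knot (hc : DecreasingLogConvex c) (j : ℕ) : interp c (knot c j) = c j := by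
  have hsup : (⨆ k, min (c 0) (secant c k (knot c j))) = c j := by
    refine le_antisymm (ciSup_le fun k => (min_le_right _ _).trans (hc.secant_knot_le k j)) ?_
    calc c j = min (c 0) (secant c j (knot c j)) := by
          rw [secant_knot_self, min_eq_right (hc.antitone j.zero_le)]
      _ ≤ _ := le_ciSup (bddAbove_range_min_secant _) j
  rw [interp, hsup, max_eq_right (hc.pos j).le]

theorem interp_antitone (hc : DecreasingLogConvex c) : Antitone (interp c) := fun a b hab =>
  max_le_max le_rfl <| ciSup_le fun k =>
    (min_le_min le_rfl (by simp only [secant]; nlinarith [hc.secantSlope_nonpos k])).trans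
      (le_ciSup (bddAbove_range_min_secant a) k)

theorem monotone_add_interp (hc : DecreasingLogConvex c) : Monotone fun x => x + interp c x := by
  intro a b hab
  have hmin : ∀ k, min (c 0) (secant c k a) ≤ min (c 0) (secant c k b) + (b - a) := fun k => by
    rw [← min_add_add_right]
    exact min_le_min (by linarith)
      (by simp only [secant]; nlinarith [hc.neg_one_le_secantSlope k])
  have hsup : (⨆ k, min (c 0) (secant c k a)) ≤ (⨆ k, min (c 0) (secant c k b)) + (b - a) :=
    ciSup_le fun k => (hmin k).trans (by gcongr; exact le_ciSup (bddAbove_range_min_secant b) k)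
  have : interp c a ≤ interp c b + (b - a) :=
    max_le (by linarith [interp_nonneg (c := c) b])
      (hsup.trans (by gcongr; exact le_max_right _ _))
  linarith

theorem lipschitzWith_interp (hc : DecreasingLogConvex c) : LipschitzWith 1 (interp c) :=
  lipschitzWith_one_of_antitone hc.interp_antitone hc.monotone_add_interp

theorem interp_le_of_knot_le (hc : DecreasingLogConvex c) {n : ℕ} {x : ℝ} (hx : knot c n ≤ x) :
    interp c x ≤ c n :=
  (hc.interp_antitone hx).trans_eq (hc.interp_knot n)

theorem intervalIntegrable_interp (hc : DecreasingLogConvex c) (a b : ℝ) :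
    IntervalIntegrable (interp c) MeasureTheory.volume a b :=
  hc.lipschitzWith_interp.continuous.intervalIntegrable a b

theorem lipschitzWith_add_interp (hc : DecreasingLogConvex c) :
    LipschitzWith 1 fun x => x + interp c x :=
  lipschitzWith_one_add_of_antitone hc.interp_antitone hc.monotone_add_interp

theorem hasDerivAt_integral_interp (hc : DecreasingLogConvex c) (x : ℝ) :
    HasDerivAt (fun t => ∫ s in (0 : ℝ)..t, interp c s) (interp c x) x :=
  (hc.lipschitzWith_interp.continuous.integral_hasStrictDerivAt 0 x).hasDerivAt

theorem hasDerivAt_dcaH (hc : DecreasingLogConvex c) (x : ℝ) :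
    HasDerivAt (dcaH c) (x + interp c x) x := by
  have hsq : HasDerivAt (fun t : ℝ => t ^ 2 / 2) x x := by
    simpa using (hasDerivAt_pow 2 x).div_const 2
  exact hsq.add (hc.hasDerivAt_integral_interp x)

theorem deriv_dcaH (hc : DecreasingLogConvex c) : deriv (dcaH c) = fun x => x + interp c x :=
  funext fun x => (hc.hasDerivAt_dcaH x).deriv

theorem differentiable_dcaH (hc : DecreasingLogConvex c) : Differentiable ℝ (dcaH c) :=
  fun x => (hc.hasDerivAt_dcaH x).differentiableAt

theorem convexOn_dcaH (hc : DecreasingLogConvex c) : ConvexOn ℝ Set.univ (dcaH c) :=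
  Monotone.convexOn_univ_of_deriv hc.differentiable_dcaH (hc.deriv_dcaH ▸ hc.monotone_add_interp)

theorem hasDerivAt_sq_half_sub_dcaH (hc : DecreasingLogConvex c) (x : ℝ) :
    HasDerivAt (fun t => t ^ 2 / 2 - dcaH c t) (-interp c x) x := by
  simp only [sq_half_sub_dcaH]
  exact (hc.hasDerivAt_integral_interp x).neg

theorem convexOn_sq_half_sub_dcaH (hc : DecreasingLogConvex c) :
    ConvexOn ℝ Set.univ fun t => t ^ 2 / 2 - dcaH c t := by
  refine Monotone.convexOn_univ_of_deriv
    (fun x => (hc.hasDerivAt_sq_half_sub_dcaH x).differentiableAt) ?_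
  rw [funext fun x => (hc.hasDerivAt_sq_half_sub_dcaH x).deriv]
  exact hc.interp_antitone.neg

theorem integral_interp_knot_le (hc : DecreasingLogConvex c) (n : ℕ) :
    ∫ s in (0 : ℝ)..knot c n, interp c s ≤ ∑ k ∈ Finset.range n, c k ^ 2 := by
  induction n with
  | zero => simp
  | succ n ih =>
    have hint : ∫ s in knot c n..knot c (n + 1), interp c s ≤ c n ^ 2 := by
      calc ∫ s in knot c n..knot c (n + 1), interp c s
          ≤ ∫ _ in knot c n..knot c (n + 1), c n :=
            intervalIntegral.integral_mono_on (hc.knot_mono n.le_succ)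
              (hc.intervalIntegrable_interp _ _) intervalIntegrable_const
              fun s hs => hc.interp_le_of_knot_le hs.1
        _ = c n ^ 2 := by simp [knot_succ, sq]
    rw [← intervalIntegral.integral_add_adjacent_intervals (hc.intervalIntegrable_interp _ _)
      (hc.intervalIntegrable_interp _ _), Finset.sum_range_succ]
    linarith

theorem integral_interp_le_add (hc : DecreasingLogConvex c) (x : ℝ) (n : ℕ) :
    ∫ s in (0 : ℝ)..x, interp c s ≤ (∫ s in (0 : ℝ)..knot c n, interp c s) + |x| * c n := by
  rw [← intervalIntegral.integral_add_adjacent_intervals (hc.intervalIntegrable_interp 0 (knot c n))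
    (hc.intervalIntegrable_interp _ x)]
  gcongr
  rcases le_total x (knot c n) with hx | hx
  · rw [intervalIntegral.integral_symm]
    have : 0 ≤ ∫ s in x..knot c n, interp c s :=
      intervalIntegral.integral_nonneg hx fun s _ => interp_nonneg s
    linarith [mul_nonneg (abs_nonneg x) (hc.pos n).le]
  · calc ∫ s in knot c n..x, interp c s ≤ ∫ _ in knot c n..x, c n :=
          intervalIntegral.integral_mono_on hx (hc.intervalIntegrable_interp _ _)
            intervalIntegrable_const fun s hs => hc.interp_le_of_knot_le hs.1
      _ ≤ |x| * c n := by
          rw [intervalIntegral.integral_const, smul_eq_mul]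
          gcongr
          · exact (hc.pos n).le
          · linarith [hc.knot_nonneg n, le_abs_self x]

theorem integral_interp_le (hc : DecreasingLogConvex c) (hsum : Summable fun k => c k ^ 2)
    (x : ℝ) :
    ∫ s in (0 : ℝ)..x, interp c s ≤ ∑' k, c k ^ 2 := by
  have hlim : Tendsto c atTop (𝓝 0) := by
    simpa [Real.sqrt_sq (hc.pos _).le] using hsum.tendsto_atTop_zero.sqrt
  refine ge_of_tendsto' (by simpa using (hlim.const_mul |x|).const_add (∑' k, c k ^ 2))
    fun n => ?_
  have hknot := (hc.integral_interp_knot_le n).trans (hsum.sum_le_tsum _ fun k _ => sq_nonneg _)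
  linarith [hc.integral_interp_le_add x n]

end DecreasingLogConvex

theorem decreasingLogConvex_rpow_neg {p : ℝ} (hp : 0 ≤ p) :
    DecreasingLogConvex fun k : ℕ => ((k : ℝ) + 1) ^ (-p) where
  pos k := by positivity
  antitone k j h :=
    Real.rpow_le_rpow_of_nonpos (by positivity) (by gcongr) (neg_nonpos.2 hp)
  ratio_mono k j h := by
    have hkj : (k : ℝ) ≤ j := Nat.cast_le.2 h
    dsimp only
    rw [div_le_div_iff₀ (by positivity) (by positivity), ← Real.mul_rpow (by positivity)
      (by positivity), ← Real.mul_rpow (by positivity) (by positivity)]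
    push_cast
    exact Real.rpow_le_rpow_of_nonpos (by positivity) (by nlinarith) (neg_nonpos.2 hp)

theorem rpow_neg_sq (p x : ℝ) (hx : 0 < x) : (x ^ (-p)) ^ 2 = 1 / x ^ (2 * p) := by
  rw [← Real.rpow_natCast, ← Real.rpow_mul hx.le,
    show -p * ((2 : ℕ) : ℝ) = -(2 * p) by push_cast; ring, Real.rpow_neg hx.le, one_div]

theorem summable_sq_rpow_neg {p : ℝ} (hp : 1 / 2 < p) :
    Summable fun k : ℕ => (((k : ℝ) + 1) ^ (-p)) ^ 2 :=
  ((Real.summable_one_div_nat_add_rpow 1 (2 * p)).2 (by linarith)).congr fun k => by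
    rw [rpow_neg_sq p _ (by positivity), abs_of_pos (by positivity)]

end DCASlow

open DCASlow

/-- Slow convergence of the DCA even on a convex objective: with `g x = x²/2`,
for every `δ > 0` there is a convex, continuously differentiable `h : ℝ → ℝ`
with `1`-Lipschitz derivative such that `f = g - h` is convex and bounded
below, while the DCA iterates starting from `x₀ = 0` satisfy
`|f' (x k)|² = 1/(k+1)^(1+2δ)` for all `k`. -/
theorem dca_slow_on_convex_objective :
    ∀ δ : ℝ, 0 < δ → ∃ h : ℝ → ℝ,
      ConvexOn ℝ Set.univ h ∧
      Differentiable ℝ h ∧ Continuous (deriv h) ∧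
      (∀ a b : ℝ, |deriv h a - deriv h b| ≤ |a - b|) ∧
      ConvexOn ℝ Set.univ (fun t : ℝ => t ^ 2 / 2 - h t) ∧
      (∃ c : ℝ, ∀ t : ℝ, t ^ 2 / 2 - h t ≥ c) ∧
      ∃ x : ℕ → ℝ, x 0 = 0 ∧
        (∀ k : ℕ, ∀ y : ℝ,
          (x (k + 1)) ^ 2 / 2 - deriv h (x k) * (x (k + 1) - x k) ≤
            y ^ 2 / 2 - deriv h (x k) * (y - x k)) ∧
        (∀ k : ℕ,
          |deriv (fun t : ℝ => t ^ 2 / 2 - h t) (x k)| ^ 2 =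
            1 / ((k : ℝ) + 1) ^ (1 + 2 * δ)) := by
  intro δ hδ
  set c : ℕ → ℝ := fun k => ((k : ℝ) + 1) ^ (-((1 + 2 * δ) / 2))
  have hc : DecreasingLogConvex c := decreasingLogConvex_rpow_neg (by linarith)
  have hsum : Summable fun k => c k ^ 2 := summable_sq_rpow_neg (by linarith)
  have hstep (k : ℕ) : deriv (dcaH c) (knot c k) = knot c (k + 1) := by
    simp only [hc.deriv_dcaH, hc.interp_knot, knot_succ]
  refine ⟨dcaH c, hc.convexOn_dcaH, hc.differentiable_dcaH, ?_, fun a b => ?_,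
    hc.convexOn_sq_half_sub_dcaH, ⟨-∑' k, c k ^ 2, fun t => ?_⟩, knot c, knot_zero,
    fun k y => ?_, fun k => ?_⟩
  · exact hc.deriv_dcaH ▸ hc.lipschitzWith_add_interp.continuous
  · simpa [hc.deriv_dcaH, Real.dist_eq] using hc.lipschitzWith_add_interp.dist_le_mul a b
  · linarith [sq_half_sub_dcaH (c := c) t, hc.integral_interp_le hsum t]
  · rw [hstep]
    nlinarith [sq_nonneg (y - knot c (k + 1))]
  · rw [(hc.hasDerivAt_sq_half_sub_dcaH _).deriv, hc.interp_knot, abs_neg, sq_abs,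
      rpow_neg_sq _ _ (by positivity)]
    ring_nf
end
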